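/- Each robot's final accumulated delay equals the sum of its per-collaboration waiting times: for every robot i, d_K(i) = Σ_{k < K, i ∈ S_k} (T_k − (t_k(i) + d_k(i))), and each summand T_k − (t_k(i) + d_k(i)) is nonnegative. -/

import Mathlib

theorem final_delay_eq_sum_of_waits_general (n K : ℕ)
    (S : Fin K → Finset (Fin n)) (hS : ∀ k, (S k).Nonempty)
    (t : Fin K → Fin n → ℝ) (d : ℕ → Fin n → ℝ)
    (hd0 : ∀ i, d 0 i = 0)
    (hd : ∀ k : Fin K, ∀ i : Fin n,
      d (k + 1) i =
        if i ∈ S k then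
          (S k).sup' (hS k) (fun j => t k j + d k j) - t k i
        else d k i) :
    (∀ i : Fin n,
      d K i =
        ∑ k ∈ Finset.univ.filter (fun k : Fin K => i ∈ S k),
          ((S k).sup' (hS k) (fun j => t k j + d k j) - (t k i + d k i))) ∧
    (∀ k : Fin K, ∀ i ∈ S k,
      0 ≤ (S k).sup' (hS k) (fun j => t k j + d k j) - (t k i + d k i)) := by
  refine ⟨fun i => ?_, fun k i hi => sub_nonneg.mpr (Finset.le_sup' (fun j => t k j + d k j) hi)⟩
  have increment : ∀ k : Fin K, d (k + 1) i - d k i =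
      if i ∈ S k then (S k).sup' (hS k) (fun j => t k j + d k j) - (t k i + d k i) else 0 := by
    intro k
    rw [hd]
    split_ifs <;> ring
  calc d K i = ∑ k ∈ Finset.range K, (d (k + 1) i - d k i) := by
        rw [Finset.sum_range_sub (fun m => d m i), hd0, sub_zero]
    _ = ∑ k : Fin K, (d (k + 1) i - d k i) :=
        (Fin.sum_univ_eq_sum_range (fun m => d (m + 1) i - d m i) K).symm
    _ = _ := by rw [Finset.sum_filter]; exact Finset.sum_congr rfl fun k _ => increment k

/-- Each robot's final accumulated delay equals the sum of its
per-collaboration waiting times, and each waiting time is nonnegative. -/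
theorem final_delay_eq_sum_of_waits (n K : ℕ) (hn : 1 ≤ n)
    (S : Fin K → Finset (Fin n)) (hS : ∀ k, (S k).Nonempty)
    (t : Fin K → Fin n → ℝ) (d : ℕ → Fin n → ℝ)
    (hd0 : ∀ i, d 0 i = 0)
    (hd : ∀ k : Fin K, ∀ i : Fin n,
      d (k + 1) i =
        if i ∈ S k then
          (S k).sup' (hS k) (fun j => t k j + d k j) - t k i
        else d k i) :
    (∀ i : Fin n,
      d K i =
        ∑ k ∈ Finset.univ.filter (fun k : Fin K => i ∈ S k),
          ((S k).sup' (hS k) (fun j => t k j + d k j) - (t k i + d k i))) ∧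
    (∀ k : Fin K, ∀ i ∈ S k,
      0 ≤ (S k).sup' (hS k) (fun j => t k j + d k j) - (t k i + d k i)) :=
  final_delay_eq_sum_of_waits_general n K S hS t d hd0 hd
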